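/- Let {g_λ}_{λ∈Λ} ∪ {χ} ⊆ L¹(ℝ^d) ∩ L²(ℝ^d), Λ countable, satisfy the frame upper bound ‖f∗χ‖₂² + Σ_{λ∈Λ} ‖f∗g_λ‖₂² ≤ B‖f‖₂² for all f ∈ L²(ℝ^d). Let M, P : L²(ℝ^d) → L²(ℝ^d) be Lipschitz with constants L and R respectively, with M0 = 0 and P0 = 0, let S ≥ 1, and set U[λ]f := S^{d/2} P(M(f∗g_λ))(S·). Then for all f, h ∈ L²(ℝ^d): ‖f∗χ − h∗χ‖₂² + Σ_{λ∈Λ} ‖U[λ]f − U[λ]h‖₂² ≤ max{B, B L² R²} · ‖f − h‖₂². In particular (taking h = 0), ‖f∗χ‖₂² + Σ_{λ∈Λ} ‖U[λ]f‖₂² ≤ max{B, B L² R²} · ‖f‖₂². -/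

import Mathlib

open MeasureTheory
open scoped ENNReal FourierTransform

noncomputable section

/-- `ℝ^d` as a Euclidean space. -/
abbrev Ed (d : ℕ) : Type := EuclideanSpace ℝ (Fin d)

/-- Convolution `(f ∗ g)(x) = ∫ f(y) g(x − y) dy`. -/
def convol {d : ℕ} (f g : Ed d → ℂ) : Ed d → ℂ := fun x => ∫ y, f y * g (x - y)

/-- One network layer: `U[λ]f = S^{d/2} · P(M(f ∗ g))(S·)`. -/
def layerU {d : ℕ} (S : ℝ) (P M : (Ed d → ℂ) → (Ed d → ℂ)) (g : Ed d → ℂ)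
    (f : Ed d → ℂ) : Ed d → ℂ :=
  fun x => ((S ^ ((d : ℝ) / 2) : ℝ) : ℂ) * P (M (convol f g)) (S • x)

/-!
Convolution is linear on `L²`, and `φ ↦ S^{d/2} φ(S·)` is an isometry of `L²(ℝ^d)` because
Lebesgue measure scales by `S^{-d}` under `x ↦ S x`. Hence
`‖U[λ]f − U[λ]h‖₂ ≤ R L ‖(f − h) ∗ g_λ‖₂`, so the left-hand side is at most `max 1 (L²R²)` times
the frame sum of `f − h`, which the frame bound controls. The frame bound also shows that every
`f ∗ g_λ` lies in `L²`, which the Lipschitz hypotheses require.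
-/

section Dilation

open Module

variable {E F : Type*} [NormedAddCommGroup E] [NormedSpace ℝ E] [FiniteDimensional ℝ E]
  [MeasurableSpace E] [BorelSpace E] (μ : Measure E) [μ.IsAddHaarMeasure]
  [NormedAddCommGroup F]

theorem eLpNorm_comp_smul {S : ℝ} (hS : 0 < S) (φ : E → F) (p : ℝ≥0∞) :
    eLpNorm (fun x => φ (S • x)) p μ
      = ENNReal.ofReal (S ^ finrank ℝ E)⁻¹ ^ (1 / p).toReal * eLpNorm φ p μ := by
  have hmap := Measure.map_addHaar_smul μ hS.ne'
  rw [abs_of_pos (by positivity)] at hmap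
  rw [← smul_eq_mul, ← eLpNorm_smul_measure_of_ne_zero (by positivity), ← hmap,
    (measurableEmbedding_const_smul₀ hS.ne').eLpNorm_map_measure]
  rfl

theorem eLpNorm_two_normalized_comp_smul {S : ℝ} (hS : 0 < S) (φ : E → ℂ) :
    eLpNorm (fun x => ((S ^ ((finrank ℝ E : ℝ) / 2) : ℝ) : ℂ) * φ (S • x)) 2 μ
      = eLpNorm φ 2 μ := by
  have hscale : ‖((S ^ ((finrank ℝ E : ℝ) / 2) : ℝ) : ℂ)‖ₑ
      * ENNReal.ofReal (S ^ finrank ℝ E)⁻¹ ^ (1 / (2 : ℝ≥0∞)).toReal = 1 := by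
    rw [← ofReal_norm, Complex.norm_real, Real.norm_of_nonneg (by positivity),
      ENNReal.ofReal_rpow_of_nonneg (x := (S ^ finrank ℝ E)⁻¹) (by positivity) (by positivity),
      ← ENNReal.ofReal_mul (by positivity), ← ENNReal.ofReal_one]
    congr 1
    rw [Real.inv_rpow (by positivity), ← Real.rpow_natCast, ← Real.rpow_mul hS.le]
    norm_num [div_eq_mul_inv]
    exact mul_inv_cancel₀ (by positivity)
  rw [show (fun x => ((S ^ ((finrank ℝ E : ℝ) / 2) : ℝ) : ℂ) * φ (S • x))
      = ((S ^ ((finrank ℝ E : ℝ) / 2) : ℝ) : ℂ) • fun x => φ (S • x) from rfl,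
    eLpNorm_const_smul, eLpNorm_comp_smul μ hS, ← mul_assoc, hscale, one_mul]

end Dilation

theorem ENNReal.add_tsum_le_max_one_mul {ι : Type*} {a c K : ℝ≥0∞} {x y : ι → ℝ≥0∞}
    (hyx : ∀ i, y i ≤ c * x i) (hK : a + ∑' i, x i ≤ K) : a + ∑' i, y i ≤ max 1 c * K :=
  calc a + ∑' i, y i ≤ a + c * ∑' i, x i := by
        rw [← ENNReal.tsum_mul_left]
        gcongr with i
        exact hyx i
    _ ≤ max 1 c * a + max 1 c * ∑' i, x i := by
        gcongr
        · exact le_mul_of_one_le_left' (le_max_left 1 c)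
        · exact le_max_right 1 c
    _ ≤ max 1 c * K := by
        rw [← mul_add]
        gcongr

section Convolution

variable {d : ℕ}

theorem aestronglyMeasurable_convol {f g : Ed d → ℂ} (hf : AEStronglyMeasurable f volume)
    (hg : AEStronglyMeasurable g volume) : AEStronglyMeasurable (convol f g) volume :=
  (hf.convolution_integrand (ContinuousLinearMap.mul ℝ ℂ) hg).integral_prod_right'

theorem integrable_convol_integrand {f g : Ed d → ℂ} (hf : MemLp f 2 volume)
    (hg : MemLp g 2 volume) (x : Ed d) : Integrable (fun y => f y * g (x - y)) volume :=
  memLp_one_iff_integrable.mp <|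
    (hg.comp_measurePreserving (Measure.measurePreserving_sub_left volume x)).smul hf

theorem convol_sub_left {f h g : Ed d → ℂ} (hf : MemLp f 2 volume) (hh : MemLp h 2 volume)
    (hg : MemLp g 2 volume) : convol (f - h) g = convol f g - convol h g := by
  funext x
  simp only [Pi.sub_apply, convol, sub_mul]
  exact integral_sub (integrable_convol_integrand hf hg x) (integrable_convol_integrand hh hg x)

theorem convol_zero_left (g : Ed d → ℂ) : convol 0 g = 0 := by
  funext x
  simp [convol]

theorem memLp_convol_of_frame_bound {Λ : Type} {g : Λ → Ed d → ℂ} {χ : Ed d → ℂ} {B : ℝ}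
    (hg : ∀ lam, AEStronglyMeasurable (g lam) volume)
    (hUpper : ∀ f : Ed d → ℂ, MemLp f 2 volume →
      eLpNorm (convol f χ) 2 volume ^ 2 +
          ∑' lam, eLpNorm (convol f (g lam)) 2 volume ^ 2 ≤
        ENNReal.ofReal B * eLpNorm f 2 volume ^ 2)
    {f : Ed d → ℂ} (hf : MemLp f 2 volume) (lam : Λ) : MemLp (convol f (g lam)) 2 volume := by
  refine ⟨aestronglyMeasurable_convol hf.1 (hg lam), ?_⟩
  have hsq : eLpNorm (convol f (g lam)) 2 volume ^ 2 < ∞ :=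
    calc eLpNorm (convol f (g lam)) 2 volume ^ 2
        ≤ ∑' l, eLpNorm (convol f (g l)) 2 volume ^ 2 := ENNReal.le_tsum lam
      _ ≤ ENNReal.ofReal B * eLpNorm f 2 volume ^ 2 := le_add_self.trans (hUpper f hf)
      _ < ∞ := ENNReal.mul_lt_top ENNReal.ofReal_lt_top (ENNReal.pow_lt_top hf.2)
  exact (ENNReal.pow_lt_top_iff.mp hsq).resolve_right two_ne_zero

end Convolution

section Layer

variable {d : ℕ} {S : ℝ} {P M : (Ed d → ℂ) → (Ed d → ℂ)} {g : Ed d → ℂ}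

theorem layerU_zero (hM0 : M 0 = 0) (hP0 : P 0 = 0) : layerU S P M g 0 = 0 := by
  funext x
  simp [layerU, convol_zero_left, hM0, hP0]

theorem eLpNorm_layerU_sub_le {L R : ℝ} (hS : 0 < S)
    (hMmem : ∀ f : Ed d → ℂ, MemLp f 2 volume → MemLp (M f) 2 volume)
    (hMlip : ∀ f h : Ed d → ℂ, MemLp f 2 volume → MemLp h 2 volume →
      eLpNorm (M f - M h) 2 volume ≤ ENNReal.ofReal L * eLpNorm (f - h) 2 volume)
    (hPlip : ∀ f h : Ed d → ℂ, MemLp f 2 volume → MemLp h 2 volume →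
      eLpNorm (P f - P h) 2 volume ≤ ENNReal.ofReal R * eLpNorm (f - h) 2 volume)
    {f h : Ed d → ℂ} (hf : MemLp (convol f g) 2 volume) (hh : MemLp (convol h g) 2 volume) :
    eLpNorm (layerU S P M g f - layerU S P M g h) 2 volume
      ≤ ENNReal.ofReal R * (ENNReal.ofReal L * eLpNorm (convol f g - convol h g) 2 volume) := by
  have hdilate : layerU S P M g f - layerU S P M g h
      = fun x => ((S ^ ((Module.finrank ℝ (Ed d) : ℝ) / 2) : ℝ) : ℂ) *
          (P (M (convol f g)) - P (M (convol h g))) (S • x) := by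
    funext x
    simp [layerU, mul_sub]
  rw [hdilate, eLpNorm_two_normalized_comp_smul volume hS]
  calc eLpNorm (P (M (convol f g)) - P (M (convol h g))) 2 volume
      ≤ ENNReal.ofReal R * eLpNorm (M (convol f g) - M (convol h g)) 2 volume :=
        hPlip _ _ (hMmem _ hf) (hMmem _ hh)
    _ ≤ ENNReal.ofReal R * (ENNReal.ofReal L * eLpNorm (convol f g - convol h g) 2 volume) := by
        gcongr
        exact hMlip _ _ hf hh

theorem eLpNorm_layerU_sub_sq_le {L R : ℝ} (hS : 0 < S) (hL : 0 ≤ L) (hR : 0 ≤ R)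
    (hMmem : ∀ f : Ed d → ℂ, MemLp f 2 volume → MemLp (M f) 2 volume)
    (hMlip : ∀ f h : Ed d → ℂ, MemLp f 2 volume → MemLp h 2 volume →
      eLpNorm (M f - M h) 2 volume ≤ ENNReal.ofReal L * eLpNorm (f - h) 2 volume)
    (hPlip : ∀ f h : Ed d → ℂ, MemLp f 2 volume → MemLp h 2 volume →
      eLpNorm (P f - P h) 2 volume ≤ ENNReal.ofReal R * eLpNorm (f - h) 2 volume)
    (hg : MemLp g 2 volume) {f h : Ed d → ℂ} (hf : MemLp f 2 volume) (hh : MemLp h 2 volume)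
    (hfg : MemLp (convol f g) 2 volume) (hhg : MemLp (convol h g) 2 volume) :
    eLpNorm (layerU S P M g f - layerU S P M g h) 2 volume ^ 2
      ≤ ENNReal.ofReal (L ^ 2 * R ^ 2) * eLpNorm (convol (f - h) g) 2 volume ^ 2 :=
  calc _ ≤ (ENNReal.ofReal R * (ENNReal.ofReal L *
          eLpNorm (convol f g - convol h g) 2 volume)) ^ 2 := by
        gcongr
        exact eLpNorm_layerU_sub_le hS hMmem hMlip hPlip hfg hhg
    _ = _ := by
        rw [convol_sub_left hf hh hg, ← mul_assoc, ← ENNReal.ofReal_mul hR, mul_pow,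
          ← ENNReal.ofReal_pow (by positivity), mul_pow, mul_comm (R ^ 2)]

end Layer
theorem stmt_5_general {d : ℕ} {Λ : Type} [Countable Λ]
    (g : Λ → Ed d → ℂ) (χ : Ed d → ℂ)
    (hg2 : ∀ lam, MemLp (g lam) 2 volume)
    (hχ2 : MemLp χ 2 volume)
    (B : ℝ)
    (hUpper : ∀ f : Ed d → ℂ, MemLp f 2 volume →
      eLpNorm (convol f χ) 2 volume ^ 2 +
          ∑' lam, eLpNorm (convol f (g lam)) 2 volume ^ 2 ≤
        ENNReal.ofReal B * eLpNorm f 2 volume ^ 2)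
    (M P : (Ed d → ℂ) → (Ed d → ℂ)) (L R S : ℝ)
    (hL : 0 ≤ L) (hR : 0 ≤ R) (hS : 1 ≤ S)
    (hMmem : ∀ f : Ed d → ℂ, MemLp f 2 volume → MemLp (M f) 2 volume)
    (hMlip : ∀ f h : Ed d → ℂ, MemLp f 2 volume → MemLp h 2 volume →
      eLpNorm (M f - M h) 2 volume ≤ ENNReal.ofReal L * eLpNorm (f - h) 2 volume)
    (hPlip : ∀ f h : Ed d → ℂ, MemLp f 2 volume → MemLp h 2 volume →
      eLpNorm (P f - P h) 2 volume ≤ ENNReal.ofReal R * eLpNorm (f - h) 2 volume)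
    (hM0 : M 0 = 0) (hP0 : P 0 = 0) :
    (∀ f h : Ed d → ℂ, MemLp f 2 volume → MemLp h 2 volume →
      eLpNorm (convol f χ - convol h χ) 2 volume ^ 2 +
          ∑' lam,
            eLpNorm (layerU S P M (g lam) f - layerU S P M (g lam) h) 2 volume ^ 2 ≤
        ENNReal.ofReal (max B (B * L ^ 2 * R ^ 2)) * eLpNorm (f - h) 2 volume ^ 2) ∧
    (∀ f : Ed d → ℂ, MemLp f 2 volume →
      eLpNorm (convol f χ) 2 volume ^ 2 +
          ∑' lam, eLpNorm (layerU S P M (g lam) f) 2 volume ^ 2 ≤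
        ENNReal.ofReal (max B (B * L ^ 2 * R ^ 2)) * eLpNorm f 2 volume ^ 2) := by
  have hconv {u : Ed d → ℂ} (hu : MemLp u 2 volume) (lam : Λ) :=
    memLp_convol_of_frame_bound (fun lam => (hg2 lam).1) hUpper hu lam
  have hmain : ∀ f h : Ed d → ℂ, MemLp f 2 volume → MemLp h 2 volume →
      eLpNorm (convol f χ - convol h χ) 2 volume ^ 2 +
          ∑' lam,
            eLpNorm (layerU S P M (g lam) f - layerU S P M (g lam) h) 2 volume ^ 2 ≤
        ENNReal.ofReal (max B (B * L ^ 2 * R ^ 2)) * eLpNorm (f - h) 2 volume ^ 2 := by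
    intro f h hf hh
    rw [← convol_sub_left hf hh hχ2]
    calc _ ≤ max 1 (ENNReal.ofReal (L ^ 2 * R ^ 2)) *
            (ENNReal.ofReal B * eLpNorm (f - h) 2 volume ^ 2) :=
          ENNReal.add_tsum_le_max_one_mul
            (fun lam => eLpNorm_layerU_sub_sq_le (by linarith) hL hR hMmem hMlip hPlip (hg2 lam)
              hf hh (hconv hf lam) (hconv hh lam))
            (hUpper _ (hf.sub hh))
      _ = _ := by
          rw [← mul_assoc, max_mul_of_nonneg _ _ zero_le, one_mul,
            ← ENNReal.ofReal_mul (by positivity), ENNReal.ofReal_max, mul_comm (L ^ 2 * R ^ 2),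
            mul_assoc B]
  refine ⟨hmain, fun f hf => ?_⟩
  simpa [convol_zero_left, layerU_zero hM0 hP0] using hmain f 0 hf MemLp.zero

/-- One-layer Lipschitz/telescoping estimate combining the output atom χ and the
propagating layer operators. -/
theorem stmt_5 {d : ℕ} {Λ : Type} [Countable Λ]
    (g : Λ → Ed d → ℂ) (χ : Ed d → ℂ)
    (hg1 : ∀ lam, MemLp (g lam) 1 volume) (hg2 : ∀ lam, MemLp (g lam) 2 volume)
    (hχ1 : MemLp χ 1 volume) (hχ2 : MemLp χ 2 volume)
    (B : ℝ) (hB : 0 < B)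
    (hUpper : ∀ f : Ed d → ℂ, MemLp f 2 volume →
      eLpNorm (convol f χ) 2 volume ^ 2 +
          ∑' lam, eLpNorm (convol f (g lam)) 2 volume ^ 2 ≤
        ENNReal.ofReal B * eLpNorm f 2 volume ^ 2)
    (M P : (Ed d → ℂ) → (Ed d → ℂ)) (L R S : ℝ)
    (hL : 0 ≤ L) (hR : 0 ≤ R) (hS : 1 ≤ S)
    (hMmem : ∀ f : Ed d → ℂ, MemLp f 2 volume → MemLp (M f) 2 volume)
    (hPmem : ∀ f : Ed d → ℂ, MemLp f 2 volume → MemLp (P f) 2 volume)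
    (hMlip : ∀ f h : Ed d → ℂ, MemLp f 2 volume → MemLp h 2 volume →
      eLpNorm (M f - M h) 2 volume ≤ ENNReal.ofReal L * eLpNorm (f - h) 2 volume)
    (hPlip : ∀ f h : Ed d → ℂ, MemLp f 2 volume → MemLp h 2 volume →
      eLpNorm (P f - P h) 2 volume ≤ ENNReal.ofReal R * eLpNorm (f - h) 2 volume)
    (hM0 : M 0 = 0) (hP0 : P 0 = 0) :
    (∀ f h : Ed d → ℂ, MemLp f 2 volume → MemLp h 2 volume →
      eLpNorm (convol f χ - convol h χ) 2 volume ^ 2 +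
          ∑' lam,
            eLpNorm (layerU S P M (g lam) f - layerU S P M (g lam) h) 2 volume ^ 2 ≤
        ENNReal.ofReal (max B (B * L ^ 2 * R ^ 2)) * eLpNorm (f - h) 2 volume ^ 2) ∧
    (∀ f : Ed d → ℂ, MemLp f 2 volume →
      eLpNorm (convol f χ) 2 volume ^ 2 +
          ∑' lam, eLpNorm (layerU S P M (g lam) f) 2 volume ^ 2 ≤
        ENNReal.ofReal (max B (B * L ^ 2 * R ^ 2)) * eLpNorm f 2 volume ^ 2) :=
  stmt_5_general g χ hg2 hχ2 B hUpper M P L R S hL hR hS hMmem hMlip hPlip hM0 hP0
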